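/- arXiv:2009.09256 — 5 statements merged into one kernel-verified Lean document; each statement's English description precedes it below -/
import Mathlib

section
/- Let X be a shift space whose language L has the specification property with gap size τ: for every v, w ∈ L there is u ∈ L with |u| ≤ τ such that vuw ∈ L. Then for every n ≥ 1, #L_n ≤ (τ+1) e^{τ h} e^{n h}, where h = h_top(X). -/
/-!
Specification makes the word counts `c n = wcount X n` almost supermultiplicative: glue a word of
length `n` to one of length `m` through a connecting word of length `j ≤ τ` and extend the result
to a word of length `n + m + τ`; together with `j` this determines both words, so
`c n * c m ≤ (τ + 1) * c (n + m + τ)`. Iterating,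
`c n ^ (k + 1) ≤ (τ + 1) ^ k * c ((k + 1) n + k τ)`; taking logarithms, dividing by `k + 1` and
letting `k → ∞` gives `log (c n) ≤ log (τ + 1) + (n + τ) h`.
-/

open Filter

/-- The left shift on one-sided sequences. -/
def shiftMap {A : Type*} (x : ℕ → A) : ℕ → A := fun n => x (n + 1)

/-- The language of `X`: all finite words appearing at the origin of elements
of `X` (by shift invariance, all words appearing anywhere). -/
def langL {A : Type*} (X : Set (ℕ → A)) : Set (List A) :=
  {w | ∃ x ∈ X, ∀ i : Fin w.length, x i.val = w.get i}

/-- The number of length-`n` words in the language of `X`. -/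
noncomputable def wcount {A : Type*} (X : Set (ℕ → A)) (n : ℕ) : ℕ :=
  {w ∈ langL X | w.length = n}.ncard

theorem List.take_eq_and_take_drop_eq_of_prefix {α : Type*} {v u w z : List α}
    (h : v ++ u ++ w <+: z) :
    z.take v.length = v ∧ (z.drop (v.length + u.length)).take w.length = w := by
  obtain ⟨r, rfl⟩ := h
  simp [List.drop_append, List.drop_eq_nil_of_le (Nat.le_add_right v.length u.length)]

namespace langL

variable {A : Type*} {X : Set (ℕ → A)}

theorem ofFn_mem {x : ℕ → A} (hx : x ∈ X) (n : ℕ) :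
    (List.ofFn fun i : Fin n => x i) ∈ langL X :=
  ⟨x, hx, fun i => by simp⟩

theorem exists_prefix_of_le_length {w : List A} (hw : w ∈ langL X) {N : ℕ}
    (hN : w.length ≤ N) : ∃ z ∈ langL X, z.length = N ∧ w <+: z := by
  obtain ⟨x, hx, hxw⟩ := hw
  refine ⟨List.ofFn fun i : Fin N => x i, ofFn_mem hx N, by simp, ?_⟩
  rw [List.prefix_iff_eq_take]
  refine List.ext_get (by simp [hN]) fun i hi _ => ?_
  simpa using (hxw ⟨i, hi⟩).symm

end langL

section Specification

variable {A : Type*} {X : Set (ℕ → A)} {τ : ℕ}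

theorem exists_mem_langL_take_eq_and_take_drop_eq
    (hspec : ∀ v ∈ langL X, ∀ w ∈ langL X,
      ∃ u ∈ langL X, u.length ≤ τ ∧ v ++ u ++ w ∈ langL X)
    {v w : List A} (hv : v ∈ langL X) (hw : w ∈ langL X) :
    ∃ z ∈ langL X, z.length = v.length + w.length + τ ∧ ∃ j ≤ τ,
      z.take v.length = v ∧ (z.drop (v.length + j)).take w.length = w := by
  obtain ⟨u, -, hu, hvuw⟩ := hspec v hv w hw
  obtain ⟨z, hz, hzlen, hpre⟩ :=
    langL.exists_prefix_of_le_length hvuw (N := v.length + w.length + τ) (by simp; omega)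
  exact ⟨z, hz, hzlen, u.length, hu, List.take_eq_and_take_drop_eq_of_prefix hpre⟩

theorem finite_setOf_mem_langL_length_eq [Finite A] (n : ℕ) :
    {w ∈ langL X | w.length = n}.Finite :=
  (List.finite_length_eq A n).subset fun _ hw => hw.2

theorem wcount_mul_wcount_le [Finite A]
    (hspec : ∀ v ∈ langL X, ∀ w ∈ langL X,
      ∃ u ∈ langL X, u.length ≤ τ ∧ v ++ u ++ w ∈ langL X) (n m : ℕ) :
    wcount X n * wcount X m ≤ (τ + 1) * wcount X (n + m + τ) := by
  set S := {w ∈ langL X | w.length = n}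
  set T := {w ∈ langL X | w.length = m}
  set U := {w ∈ langL X | w.length = n + m + τ}
  have hcode : ∀ p : S × T, ∃ q : U × Fin (τ + 1),
      (q.1 : List A).take n = p.1 ∧ ((q.1 : List A).drop (n + q.2)).take m = p.2 := by
    rintro ⟨⟨v, hv, rfl⟩, ⟨w, hw, rfl⟩⟩
    obtain ⟨z, hz, hzlen, j, hj, hcode⟩ := exists_mem_langL_take_eq_and_take_drop_eq hspec hv hw
    exact ⟨(⟨z, hz, hzlen⟩, ⟨j, Nat.lt_succ_of_le hj⟩), hcode⟩
  choose code hcode using hcode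
  have hinj : Function.Injective code := by
    intro p p' heq
    ext : 2
    · rw [← (hcode p).1, ← (hcode p').1, heq]
    · rw [← (hcode p).2, ← (hcode p').2, heq]
  have : Finite U := (finite_setOf_mem_langL_length_eq _).to_subtype
  have := Nat.card_le_card_of_injective code hinj
  rw [Nat.card_prod, Nat.card_prod, Nat.card_eq_fintype_card (α := Fin _), Fintype.card_fin,
    mul_comm _ (τ + 1)] at this
  exact this

end Specification

section Supermultiplicative

variable {c : ℕ → ℝ} {C : ℝ} {τ : ℕ}

theorem pow_succ_le_pow_mul_of_mul_le (hc : ∀ n, 0 ≤ c n) (hC : 0 ≤ C)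
    (hmul : ∀ n m, c n * c m ≤ C * c (n + m + τ)) (n k : ℕ) :
    c n ^ (k + 1) ≤ C ^ k * c ((k + 1) * n + k * τ) := by
  induction k with
  | zero => simp
  | succ k ih =>
    calc c n ^ (k + 2) = c n ^ (k + 1) * c n := pow_succ _ _
      _ ≤ C ^ k * c ((k + 1) * n + k * τ) * c n := by gcongr; exact hc n
      _ = C ^ k * (c ((k + 1) * n + k * τ) * c n) := mul_assoc _ _ _
      _ ≤ C ^ k * (C * c ((k + 1) * n + k * τ + n + τ)) :=
          mul_le_mul_of_nonneg_left (hmul _ _) (pow_nonneg hC k)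
      _ = C ^ (k + 1) * c ((k + 2) * n + (k + 1) * τ) := by
          rw [← mul_assoc, ← pow_succ]; ring_nf

open Real in
theorem le_mul_exp_of_mul_le {h : ℝ} (hc : ∀ n, 0 ≤ c n) (hC : 0 ≤ C)
    (hmul : ∀ n m, c n * c m ≤ C * c (n + m + τ))
    (hlim : Tendsto (fun n : ℕ => log (c n) / n) atTop (nhds h)) {n : ℕ} (hn : 1 ≤ n) :
    c n ≤ C * exp ((n + τ) * h) := by
  rcases (hc n).eq_or_lt with hn0 | hpos
  · rw [← hn0]; positivity
  set M : ℕ → ℕ := fun k => (k + 1) * n + k * τ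
  have hpow := pow_succ_le_pow_mul_of_mul_le hc hC hmul n
  have hCpos : 0 < C := pos_of_mul_pos_left ((mul_pos hpos hpos).trans_le (hmul n n)) (hc _)
  have hMpos : ∀ k, 0 < c (M k) := fun k =>
    pos_of_mul_pos_right ((pow_pos hpos _).trans_le (hpow k)) (pow_nonneg hC k)
  have hbound : ∀ k : ℕ, log (c n) ≤
      (k / (k + 1) : ℝ) * log C + ((M k : ℝ) / (k + 1)) * (log (c (M k)) / M k) := by
    intro k
    have hMk : (M k : ℝ) ≠ 0 := by positivity
    have hl := log_le_log (pow_pos hpos _) (hpow k)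
    rw [log_pow, log_mul (by positivity) (hMpos k).ne', log_pow] at hl
    rw [div_mul_div_cancel₀' hMk, div_mul_eq_mul_div, ← add_div, le_div_iff₀ (by positivity)]
    push_cast at hl
    linarith
  have hM : Tendsto M atTop atTop :=
    tendsto_atTop_mono (fun k => by simp only [M, id]; nlinarith) tendsto_id
  have hfrac := tendsto_natCast_div_add_atTop (1 : ℝ)
  have hMfrac : Tendsto (fun k : ℕ => (M k : ℝ) / (k + 1)) atTop (nhds (n + τ)) := by
    have := (tendsto_const_nhds (x := (n : ℝ))).add
      ((tendsto_const_nhds (x := (τ : ℝ))).mul hfrac)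
    rw [mul_one] at this
    refine this.congr fun k => ?_
    simp only [M]
    push_cast
    field_simp
  have hlog : log (c n) ≤ log C + (n + τ) * h := by
    refine le_of_tendsto_of_tendsto' (tendsto_const_nhds (f := atTop)) ?_ hbound
    simpa using (hfrac.mul tendsto_const_nhds).add (hMfrac.mul (hlim.comp hM))
  calc c n = exp (log (c n)) := (exp_log hpos).symm
    _ ≤ exp (log C + (n + τ) * h) := exp_le_exp.mpr hlog
    _ = C * exp ((n + τ) * h) := by rw [exp_add, exp_log hCpos]

end Supermultiplicative

theorem stmt_3_general {A : Type*} [Fintype A]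
    (X : Set (ℕ → A)) (τ : ℕ)
    (hspec : ∀ v ∈ langL X, ∀ w ∈ langL X,
      ∃ u ∈ langL X, u.length ≤ τ ∧ v ++ u ++ w ∈ langL X)
    (h : ℝ)
    (hh : Tendsto (fun n : ℕ => Real.log (wcount X n) / n) atTop (nhds h)) :
    ∀ n : ℕ, 1 ≤ n →
      (wcount X n : ℝ) ≤ (τ + 1) * Real.exp (τ * h) * Real.exp (n * h) := by
  intro n hn
  have hmul (n m : ℕ) : (wcount X n : ℝ) * wcount X m ≤ (τ + 1) * wcount X (n + m + τ) := by
    exact_mod_cast wcount_mul_wcount_le hspec n m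
  calc (wcount X n : ℝ) ≤ (τ + 1) * Real.exp ((n + τ) * h) :=
        le_mul_exp_of_mul_le (fun _ => Nat.cast_nonneg _) (by positivity) hmul hh hn
    _ = (τ + 1) * Real.exp (τ * h) * Real.exp (n * h) := by
        rw [add_mul (n : ℝ), Real.exp_add]; ring

/-- For a shift space with specification (gap size `τ`), the number of
length-`n` words is at most `(τ+1) e^{τh} e^{nh}` where `h` is the
topological entropy. -/
theorem stmt_3 {A : Type*} [Fintype A] [TopologicalSpace A] [DiscreteTopology A]
    (X : Set (ℕ → A)) (hne : X.Nonempty) (hcl : IsClosed X)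
    (hinv : shiftMap '' X = X) (τ : ℕ)
    (hspec : ∀ v ∈ langL X, ∀ w ∈ langL X,
      ∃ u ∈ langL X, u.length ≤ τ ∧ v ++ u ++ w ∈ langL X)
    (h : ℝ)
    (hh : Tendsto (fun n : ℕ => Real.log (wcount X n) / n) atTop (nhds h)) :
    ∀ n : ℕ, 1 ≤ n →
      (wcount X n : ℝ) ≤ (τ + 1) * Real.exp (τ * h) * Real.exp (n * h) :=
  stmt_3_general X τ hspec h hh
end

section
/- Let X be a shift space whose language L admits a decomposition C^p · G · C^s (every w ∈ L factors as w = u^p v u^s with u^p ∈ C^p, v ∈ G, u^s ∈ C^s). Suppose #G_j ≤ Q e^{j h} for all j, where h = h_top(X) and Q ≥ 1, and suppose Σ_i #(C^p_i ∪ C^s_i) e^{-ih} < ∞. Then for any r ∈ (0,1) there exists M ∈ ℕ such that #G^M_n ≥ r · #L_n for all n, where G^M_n is the set of length-n words of the form u^p v u^s with |u^p|, |u^s| ≤ M. -/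
open Filter

/-- Number of length-`n` words in a collection `S`. -/
noncomputable def scount {A : Type*} (S : Set (List A)) (n : ℕ) : ℕ :=
  {w ∈ S | w.length = n}.ncard

/-- The collection `G^M`: length-`n` words in the language of the form
`u^p v u^s` with `u^p ∈ C^p`, `v ∈ G`, `u^s ∈ C^s` and `|u^p|, |u^s| ≤ M`. -/
def GM {A : Type*} (X : Set (ℕ → A)) (Cp G Cs : Set (List A)) (M n : ℕ) :
    Set (List A) :=
  {w | w ∈ langL X ∧ w.length = n ∧
    ∃ up ∈ Cp, ∃ v ∈ G, ∃ us ∈ Cs,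
      up.length ≤ M ∧ us.length ≤ M ∧ w = up ++ v ++ us}

/-!
A word of length `n` outside `G^M_n` factors as `u^p v u^s` with `|u^p| > M` or `|u^s| > M`.
Sorting these by the lengths `i, k` of the outer pieces and using `#G_j ≤ Q e^{jh}` bounds their
number by `Q e^{nh} Σ a_i a_k`, with `a_i = #(C^p_i ∪ C^s_i) e^{-ih}` and the sum over pairs with
`i > M` or `k > M`; this is at most `2 Q e^{nh} (Σ_i a_i) (Σ_{i > M} a_i)`. The tail of the
convergent series `Σ a_i` is eventually small, so for large `M` the bound is
`≤ (1 - r) e^{nh} ≤ (1 - r) #L_n`.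
-/

/-- Possible lengths `(|u^p|, |u^s|)` of the outer pieces of a length-`n` word outside `G^M_n`. -/
def badPairs (M n : ℕ) : Finset (ℕ × ℕ) :=
  {p ∈ Finset.range (n + 1) ×ˢ Finset.range (n + 1) | p.1 + p.2 ≤ n ∧ (M < p.1 ∨ M < p.2)}

noncomputable def weightedCount {A : Type*} (S : Set (List A)) (h : ℝ) (i : ℕ) : ℝ :=
  scount S i * Real.exp (-(i * h))

section Counting

variable {A : Type*} [Finite A]

lemma finite_setOf_mem_length_eq (S : Set (List A)) (n : ℕ) :
    {w ∈ S | w.length = n}.Finite :=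
  (List.finite_length_eq A n).subset fun _ hw => hw.2

lemma scount_mono {S T : Set (List A)} (hST : S ⊆ T) (n : ℕ) : scount S n ≤ scount T n :=
  Set.ncard_le_ncard (fun _ hw => ⟨hST hw.1, hw.2⟩) (finite_setOf_mem_length_eq T n)

lemma wcount_le_ncard_GM_add (X : Set (ℕ → A)) (Cp G Cs : Set (List A))
    (hdecomp : ∀ w ∈ langL X, ∃ up ∈ Cp, ∃ v ∈ G, ∃ us ∈ Cs, w = up ++ v ++ us) (M n : ℕ) :
    wcount X n ≤ (GM X Cp G Cs M n).ncard +
      ∑ p ∈ badPairs M n, scount Cp p.1 * scount G (n - p.1 - p.2) * scount Cs p.2 := by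
  set factors : ℕ × ℕ → Set (List A × List A × List A) := fun p =>
    {u ∈ Cp | u.length = p.1} ×ˢ {v ∈ G | v.length = n - p.1 - p.2} ×ˢ {u ∈ Cs | u.length = p.2}
  have hfactors (p : ℕ × ℕ) : (factors p).Finite :=
    (finite_setOf_mem_length_eq _ _).prod
      ((finite_setOf_mem_length_eq _ _).prod (finite_setOf_mem_length_eq _ _))
  set concat : List A × List A × List A → List A := fun t => t.1 ++ t.2.1 ++ t.2.2
  have hGM : (GM X Cp G Cs M n).Finite :=
    (finite_setOf_mem_length_eq (langL X) n).subset fun _ hw => ⟨hw.1, hw.2.1⟩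
  have hcover : {w ∈ langL X | w.length = n} ⊆
      GM X Cp G Cs M n ∪ ⋃ p ∈ badPairs M n, concat '' factors p := by
    rintro w ⟨hwL, rfl⟩
    obtain ⟨up, hup, v, hv, us, hus, rfl⟩ := hdecomp _ hwL
    by_cases hshort : up.length ≤ M ∧ us.length ≤ M
    · exact Or.inl ⟨hwL, rfl, up, hup, v, hv, us, hus, hshort.1, hshort.2, rfl⟩
    · refine Or.inr (Set.mem_biUnion (x := (up.length, us.length)) ?_
        ⟨(up, v, us), ⟨⟨hup, rfl⟩, ⟨hv, ?_⟩, ⟨hus, rfl⟩⟩, rfl⟩)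
      · simp only [badPairs, Finset.coe_filter, Set.mem_ofPred_eq, Finset.mem_product,
          Finset.mem_range, List.length_append]
        omega
      · simp only [List.length_append]
        omega
  calc wcount X n
      ≤ (GM X Cp G Cs M n ∪ ⋃ p ∈ badPairs M n, concat '' factors p).ncard := by
        refine Set.ncard_le_ncard hcover (hGM.union ?_)
        exact (badPairs M n).finite_toSet.biUnion fun p _ => (hfactors p).image _
    _ ≤ (GM X Cp G Cs M n).ncard + ∑ p ∈ badPairs M n, (concat '' factors p).ncard := by
        refine (Set.ncard_union_le _ _).trans ?_
        gcongr
        exact (badPairs M n).set_ncard_biUnion_le _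
    _ ≤ _ := by
        gcongr with p
        refine (Set.ncard_image_le (hfactors p)).trans_eq ?_
        simp only [factors, Set.ncard_prod, scount, mul_assoc]

end Counting

section Tails

open Finset

variable {f : ℕ → ℝ}

lemma sum_Ico_le_tsum_nat_add (hf : 0 ≤ f) (hs : Summable f) (m n : ℕ) :
    ∑ i ∈ Ico m n, f i ≤ ∑' k, f (k + m) := by
  rw [sum_Ico_eq_sum_range]
  simp_rw [add_comm m]
  exact ((summable_nat_add_iff m).2 hs).sum_le_tsum _ fun k _ => hf _

lemma sum_badPairs_mul_le (hf : 0 ≤ f) (M n : ℕ) :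
    ∑ p ∈ badPairs M n, f p.1 * f p.2 ≤
      2 * (∑ i ∈ range (n + 1), f i) * ∑ i ∈ Ico (M + 1) (n + 1), f i := by
  set P₁ := Ico (M + 1) (n + 1) ×ˢ range (n + 1)
  set P₂ := range (n + 1) ×ˢ Ico (M + 1) (n + 1)
  have hsub : badPairs M n ⊆ P₁ ∪ P₂ := by
    intro p hp
    simp only [badPairs, mem_filter, mem_product, mem_range] at hp
    simp only [P₁, P₂, mem_union, mem_product, mem_Ico, mem_range]
    omega
  have hnonneg (p : ℕ × ℕ) : 0 ≤ f p.1 * f p.2 := mul_nonneg (hf _) (hf _)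
  calc ∑ p ∈ badPairs M n, f p.1 * f p.2
      ≤ ∑ p ∈ P₁ ∪ P₂, f p.1 * f p.2 := sum_le_sum_of_subset_of_nonneg hsub fun p _ _ => hnonneg p
    _ ≤ ∑ p ∈ P₁, f p.1 * f p.2 + ∑ p ∈ P₂, f p.1 * f p.2 := by
        rw [← sum_union_inter]
        exact le_add_of_nonneg_right (sum_nonneg fun p _ => hnonneg p)
    _ = _ := by
        simp only [P₁, P₂, sum_product, ← mul_sum, ← sum_mul]
        ring

end Tails

section Estimate

open Finset Real

variable {A : Type*} [Finite A]

lemma scount_mul_scount_mul_scount_le {Cp G Cs : Set (List A)} {h Q : ℝ}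
    (hGup : ∀ j : ℕ, (scount G j : ℝ) ≤ Q * exp (j * h)) {i k n : ℕ} (hikn : i + k ≤ n) :
    (scount Cp i * scount G (n - i - k) * scount Cs k : ℝ) ≤
      Q * exp (n * h) * (weightedCount (Cp ∪ Cs) h i * weightedCount (Cp ∪ Cs) h k) := by
  have hexp : exp ((n - i - k : ℕ) * h) = exp (n * h) * exp (-(i * h)) * exp (-(k * h)) := by
    rw [← exp_add, ← exp_add, Nat.sub_sub, Nat.cast_sub hikn]
    push_cast
    ring_nf
  calc (scount Cp i * scount G (n - i - k) * scount Cs k : ℝ)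
      ≤ scount (Cp ∪ Cs) i * (Q * exp ((n - i - k : ℕ) * h)) * scount (Cp ∪ Cs) k := by
        gcongr
        · exact mul_nonneg (Nat.cast_nonneg _) ((Nat.cast_nonneg _).trans (hGup _))
        · exact scount_mono Set.subset_union_left i
        · exact hGup _
        · exact scount_mono Set.subset_union_right k
    _ = _ := by
        rw [hexp, weightedCount, weightedCount]
        ring

lemma wcount_le_ncard_GM_add_tail (X : Set (ℕ → A)) {Cp G Cs : Set (List A)}
    (hdecomp : ∀ w ∈ langL X, ∃ up ∈ Cp, ∃ v ∈ G, ∃ us ∈ Cs, w = up ++ v ++ us)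
    {h Q : ℝ} (hQ : 0 ≤ Q) (hGup : ∀ j : ℕ, (scount G j : ℝ) ≤ Q * exp (j * h))
    (hsum : Summable (weightedCount (Cp ∪ Cs) h)) (M n : ℕ) :
    (wcount X n : ℝ) ≤ (GM X Cp G Cs M n).ncard + Q * (2 * (∑' i, weightedCount (Cp ∪ Cs) h i) *
      ∑' k, weightedCount (Cp ∪ Cs) h (k + (M + 1))) * exp (n * h) := by
  set f := weightedCount (Cp ∪ Cs) h
  have hf : 0 ≤ f := fun i => mul_nonneg (Nat.cast_nonneg _) (exp_pos _).le
  calc (wcount X n : ℝ)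
      ≤ (GM X Cp G Cs M n).ncard +
          ∑ p ∈ badPairs M n, (scount Cp p.1 * scount G (n - p.1 - p.2) * scount Cs p.2 : ℝ) := by
        exact_mod_cast wcount_le_ncard_GM_add X Cp G Cs hdecomp M n
    _ ≤ (GM X Cp G Cs M n).ncard + ∑ p ∈ badPairs M n, Q * exp (n * h) * (f p.1 * f p.2) := by
        gcongr _ + ∑ p ∈ _, ?_ with p hp
        exact scount_mul_scount_mul_scount_le hGup (mem_filter.1 hp).2.1
    _ ≤ (GM X Cp G Cs M n).ncard + Q * exp (n * h) *
          (2 * (∑ i ∈ range (n + 1), f i) * ∑ i ∈ Ico (M + 1) (n + 1), f i) := by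
        rw [← mul_sum]
        gcongr
        exact sum_badPairs_mul_le hf M n
    _ ≤ _ := by
        rw [mul_right_comm Q]
        gcongr
        · exact sum_nonneg fun i _ => hf i
        · exact mul_nonneg zero_le_two (tsum_nonneg hf)
        · exact hsum.sum_le_tsum _ fun i _ => hf i
        · exact sum_Ico_le_tsum_nat_add hf hsum _ _

end Estimate

theorem stmt_7_general {A : Type*} [Fintype A]
    (X : Set (ℕ → A))
    (Cp G Cs : Set (List A))
    (hdecomp : ∀ w ∈ langL X, ∃ up ∈ Cp, ∃ v ∈ G, ∃ us ∈ Cs, w = up ++ v ++ us)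
    (h Q : ℝ) (hQ : 1 ≤ Q)
    (hLlow : ∀ n : ℕ, Real.exp (n * h) ≤ (wcount X n : ℝ))
    (hGup : ∀ j : ℕ, (scount G j : ℝ) ≤ Q * Real.exp (j * h))
    (hsum : Summable (fun i : ℕ =>
      (scount (Cp ∪ Cs) i : ℝ) * Real.exp (-(i * h)))) :
    ∀ r : ℝ, 0 < r → r < 1 → ∃ M : ℕ, ∀ n : ℕ,
      r * (wcount X n : ℝ) ≤ ((GM X Cp G Cs M n).ncard : ℝ) := by
  intro r _ hr1
  set f := weightedCount (Cp ∪ Cs) h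
  have htail : Tendsto (fun M => Q * (2 * (∑' i, f i) * ∑' k, f (k + (M + 1)))) atTop (nhds 0) := by
    simpa [mul_assoc] using
      ((tendsto_sum_nat_add f).comp (tendsto_add_atTop_nat 1)).const_mul (Q * (2 * ∑' i, f i))
  obtain ⟨M, hM⟩ := (htail.eventually (ge_mem_nhds (sub_pos.2 hr1))).exists
  refine ⟨M, fun n => ?_⟩
  have hbound := wcount_le_ncard_GM_add_tail X hdecomp (zero_le_one.trans hQ) hGup hsum M n
  linarith [mul_le_mul hM (hLlow n) (Real.exp_pos _).le (sub_pos.2 hr1).le]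

/-- If the language of `X` admits a decomposition `C^p · G · C^s`, the good
words satisfy `#G_j ≤ Q e^{jh}`, and `Σ_i #(C^p_i ∪ C^s_i) e^{-ih} < ∞`,
then for any `r ∈ (0,1)` there is `M` with `#G^M_n ≥ r #L_n` for all `n`. -/
theorem stmt_7 {A : Type*} [Fintype A] [TopologicalSpace A] [DiscreteTopology A]
    (X : Set (ℕ → A)) (hne : X.Nonempty) (hcl : IsClosed X)
    (hinv : shiftMap '' X = X)
    (Cp G Cs : Set (List A))
    (hCp : Cp ⊆ langL X) (hG : G ⊆ langL X) (hCs : Cs ⊆ langL X)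
    (hdecomp : ∀ w ∈ langL X, ∃ up ∈ Cp, ∃ v ∈ G, ∃ us ∈ Cs, w = up ++ v ++ us)
    (h Q : ℝ) (hQ : 1 ≤ Q)
    (hLlow : ∀ n : ℕ, Real.exp (n * h) ≤ (wcount X n : ℝ))
    (hGup : ∀ j : ℕ, (scount G j : ℝ) ≤ Q * Real.exp (j * h))
    (hsum : Summable (fun i : ℕ =>
      (scount (Cp ∪ Cs) i : ℝ) * Real.exp (-(i * h)))) :
    ∀ r : ℝ, 0 < r → r < 1 → ∃ M : ℕ, ∀ n : ℕ,
      r * (wcount X n : ℝ) ≤ ((GM X Cp G Cs M n).ncard : ℝ) :=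
  stmt_7_general X Cp G Cs hdecomp h Q hQ hLlow hGup hsum
end

section
/- Let β > 1. The β-shift X_β has the specification property if and only if the lexicographically maximal sequence z of X_β does not contain arbitrarily long runs of consecutive 0's. -/
/-!
Every point of `X_β`, and every shift of it, is lexicographically at most `z`; hence every word
of the language is admissible: each of its suffixes is `⪯ z` as far as it goes. If `z` has a run
of `r` zeros after its prefix `z₀ ⋯ z_{n-1}`, admissibility forces a word `z₀ ⋯ z_{n-1} u z₀` of
the language to copy those zeros inside `u`, so `|u| ≥ r`: specification bounds the runs.
Conversely, if every window of length `k` of `z` contains a nonzero digit, the value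
`∑ fᵢ β^{-(i+1)}` of an admissible word of length `m` is at most `1 - β^{-(m+k)} < 1`, so the
point with that value has the word as the beginning of its coding, and admissible words belong
to the language. A block `0^k` between two admissible words cannot match a window of `z`, so
`v 0^k w` is admissible again and `0^k` connects any two words.
-/

/-- The coding of a point `x ∈ [0,1)` under the `β`-transformation
`f(y) = βy mod 1`: the `n`-th digit is `⌊β f^n(x)⌋`. -/
noncomputable def betaCode (β : ℝ) (x : ℝ) : ℕ → ℕ :=
  fun n => ⌊β * (fun y : ℝ => Int.fract (β * y))^[n] x⌋₊

/-- The `β`-shift: the closure of the set of codings of points of `[0,1)`. -/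
noncomputable def betaShift (β : ℝ) : Set (ℕ → ℕ) :=
  closure (betaCode β '' Set.Ico (0 : ℝ) 1)

/-- The language of a set of sequences. -/
def langN (X : Set (ℕ → ℕ)) : Set (List ℕ) :=
  {w | ∃ x ∈ X, ∀ i : Fin w.length, x i.val = w.get i}

open Filter Topology

namespace BetaExpansion

noncomputable def betaMap (β y : ℝ) : ℝ := Int.fract (β * y)

lemma betaMap_mem_Ico (β y : ℝ) : betaMap β y ∈ Set.Ico (0 : ℝ) 1 :=
  ⟨Int.fract_nonneg _, Int.fract_lt_one _⟩

lemma betaMap_iterate_mem_Ico (β : ℝ) {y : ℝ} (hy : y ∈ Set.Ico (0 : ℝ) 1) :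
    ∀ n, (betaMap β)^[n] y ∈ Set.Ico (0 : ℝ) 1
  | 0 => hy
  | n + 1 => by rw [Function.iterate_succ_apply']; exact betaMap_mem_Ico β _

lemma betaMap_iterate_nonneg (β : ℝ) {y : ℝ} (hy : 0 ≤ y) : ∀ n, 0 ≤ (betaMap β)^[n] y
  | 0 => hy
  | n + 1 => by rw [Function.iterate_succ_apply']; exact (betaMap_mem_Ico β _).1

lemma betaCode_apply (β x : ℝ) (n : ℕ) : betaCode β x n = ⌊β * (betaMap β)^[n] x⌋₊ := rfl

lemma betaMap_eq_sub_floor {β y : ℝ} (h : 0 ≤ β * y) : betaMap β y = β * y - ⌊β * y⌋₊ := by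
  rw [betaMap, Int.fract, natCast_floor_eq_intCast_floor h]

def shift (p : ℕ) (f : ℕ → ℕ) : ℕ → ℕ := fun i => f (p + i)

lemma shift_zero (f : ℕ → ℕ) : shift 0 f = f := funext fun i => by simp [shift]

lemma shift_shift (a b : ℕ) (f : ℕ → ℕ) : shift a (shift b f) = shift (b + a) f :=
  funext fun i => by simp only [shift, add_assoc]

lemma continuous_shift (p : ℕ) : Continuous (shift p) :=
  continuous_pi fun i => continuous_apply (p + i)

lemma shift_betaCode (β y : ℝ) (p : ℕ) :
    shift p (betaCode β y) = betaCode β ((betaMap β)^[p] y) :=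
  funext fun i => by simp only [shift, betaCode_apply, add_comm p i, Function.iterate_add_apply]

lemma betaCode_succ (β y : ℝ) (n : ℕ) : betaCode β y (n + 1) = betaCode β (betaMap β y) n := by
  rw [← Function.iterate_one (betaMap β), ← shift_betaCode, shift, add_comm]

noncomputable def betaValue (β : ℝ) (f : ℕ → ℕ) (n : ℕ) : ℝ :=
  ∑ i ∈ Finset.range n, (f i : ℝ) / β ^ (i + 1)

section betaValue

variable {β : ℝ} {f g : ℕ → ℕ} {m n : ℕ}

lemma betaValue_nonneg (hβ : 0 ≤ β) : 0 ≤ betaValue β f n :=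
  Finset.sum_nonneg fun _ _ => by positivity

lemma betaValue_congr (h : ∀ i < n, f i = g i) : betaValue β f n = betaValue β g n :=
  Finset.sum_congr rfl fun i hi => by rw [h i (Finset.mem_range.1 hi)]

lemma betaValue_succ : betaValue β f (n + 1) = betaValue β f n + f n / β ^ (n + 1) :=
  Finset.sum_range_succ _ _

lemma betaValue_mono (hβ : 0 ≤ β) (h : m ≤ n) : betaValue β f m ≤ betaValue β f n :=
  Finset.sum_le_sum_of_subset_of_nonneg (Finset.range_mono h) fun _ _ _ => by positivity

lemma betaValue_add (p q : ℕ) :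
    betaValue β f (p + q) = betaValue β f p + betaValue β (shift p f) q / β ^ p := by
  rw [betaValue, Finset.sum_range_add, betaValue, betaValue, Finset.sum_div]
  congr 1
  refine Finset.sum_congr rfl fun i _ => ?_
  rw [shift, div_div, ← pow_add, add_comm (i + 1), add_assoc]

lemma mul_betaValue_one_add (hβ : β ≠ 0) :
    β * betaValue β f (1 + n) = f 0 + betaValue β (shift 1 f) n := by
  rw [betaValue_add, betaValue, Finset.sum_range_one]
  field_simp
  ring

lemma betaValue_betaCode (hβ : 0 < β) {x : ℝ} (hx : 0 ≤ x) (n : ℕ) :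
    betaValue β (betaCode β x) n = x - (betaMap β)^[n] x / β ^ n := by
  induction n with
  | zero => simp [betaValue]
  | succ n ih =>
    have hT := betaMap_eq_sub_floor (mul_nonneg hβ.le (betaMap_iterate_nonneg β hx n))
    rw [betaValue_succ, ih, Function.iterate_succ_apply', hT, betaCode_apply]
    field_simp
    ring

lemma betaCode_betaValue (hβ : 0 < β) :
    ∀ {m : ℕ} {f : ℕ → ℕ}, (∀ j ≤ m, betaValue β (shift j f) (m - j) < 1) →
      ∀ i < m, betaCode β (betaValue β f m) i = f i
  | 0, _, _, _, hi => absurd hi (Nat.not_lt_zero _)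
  | m + 1, f, h, i, hi => by
    have hr : betaValue β (shift 1 f) m ∈ Set.Ico (0 : ℝ) 1 :=
      ⟨betaValue_nonneg hβ.le, by simpa using h 1 (by omega)⟩
    have hmul : β * betaValue β f (m + 1) = f 0 + betaValue β (shift 1 f) m := by
      rw [add_comm m, mul_betaValue_one_add hβ.ne']
    cases i with
    | zero =>
      rw [betaCode_apply, Function.iterate_zero_apply, hmul, add_comm,
        Nat.floor_add_natCast hr.1, Nat.floor_eq_zero.2 hr.2, zero_add]
    | succ i =>
      have hT : betaMap β (betaValue β f (m + 1)) = betaValue β (shift 1 f) m := by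
        rw [betaMap, hmul, add_comm, Int.fract_add_natCast, Int.fract_eq_self.2 hr]
      rw [betaCode_succ, hT, betaCode_betaValue hβ (fun j hj => ?_) i (by omega), shift, add_comm]
      simpa [shift_shift, add_comm 1 j] using h (j + 1) (by omega)

end betaValue

def LexLE (x z : ℕ → ℕ) : Prop := ∀ m, (∀ i < m, x i = z i) → x m ≤ z m

lemma isOpen_setOf_forall_lt_eq (z : ℕ → ℕ) (m : ℕ) :
    IsOpen {x : ℕ → ℕ | ∀ i < m, x i = z i} := by
  simp only [Set.ofPred_forall]
  exact (Set.finite_Iio m).isOpen_biInter fun i _ =>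
    show IsOpen ((fun x : ℕ → ℕ => x i) ⁻¹' {z i}) from
      (isOpen_discrete _).preimage (continuous_apply i)

lemma isClosed_setOf_lexLE (z : ℕ → ℕ) : IsClosed {x | LexLE x z} := by
  simp only [LexLE, Set.ofPred_forall]
  exact isClosed_iInter fun m => isClosed_imp (isOpen_setOf_forall_lt_eq z m)
    (isClosed_le (continuous_apply m) continuous_const)

lemma betaCode_lexLE_of_le {β : ℝ} (hβ : 0 ≤ β) {x y : ℝ} (hy : 0 ≤ y) (hyx : y ≤ x) :
    LexLE (betaCode β y) (betaCode β x) := by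
  have hnonneg : ∀ {t : ℝ} (n : ℕ), 0 ≤ t → 0 ≤ β * (betaMap β)^[n] t := fun n ht =>
    mul_nonneg hβ (betaMap_iterate_nonneg β ht n)
  have hiter : ∀ m, (∀ i < m, betaCode β y i = betaCode β x i) →
      (betaMap β)^[m] y ≤ (betaMap β)^[m] x := by
    intro m
    induction m with
    | zero => exact fun _ => hyx
    | succ m ih =>
      intro h
      rw [Function.iterate_succ_apply', Function.iterate_succ_apply',
        betaMap_eq_sub_floor (hnonneg m hy), betaMap_eq_sub_floor (hnonneg m (hy.trans hyx))]
      have hdigit := h m m.lt_succ_self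
      rw [betaCode_apply, betaCode_apply] at hdigit
      rw [hdigit]
      gcongr
      exact ih fun i hi => h i (by omega)
  exact fun m h => Nat.floor_le_floor (mul_le_mul_of_nonneg_left (hiter m h) hβ)

lemma shift_mem_betaShift {β : ℝ} {x : ℕ → ℕ} (hx : x ∈ betaShift β) (p : ℕ) :
    shift p x ∈ betaShift β := by
  have hmaps : Set.MapsTo (shift p) (betaCode β '' Set.Ico 0 1) (betaCode β '' Set.Ico 0 1) := by
    rintro _ ⟨y, hy, rfl⟩
    exact ⟨_, betaMap_iterate_mem_Ico β hy p, (shift_betaCode β y p).symm⟩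
  exact hmaps.closure (continuous_shift p) hx

section supremum

variable {β : ℝ} {z : ℕ → ℕ} (hz : Tendsto (betaCode β) (𝓝[<] 1) (𝓝 z))
include hz

lemma exists_betaCode_eq (m : ℕ) {a : ℝ} (ha : a < 1) :
    ∃ x ∈ Set.Ioo a 1, ∀ i < m, betaCode β x i = z i :=
  ((eventually_mem_set.2 (Ioo_mem_nhdsLT ha)).and
    (hz.eventually ((isOpen_setOf_forall_lt_eq z m).mem_nhds fun _ _ => rfl))).exists

lemma mem_betaShift_of_tendsto : z ∈ betaShift β :=
  mem_closure_of_tendsto hz <| mem_of_superset (Ioo_mem_nhdsLT zero_lt_one)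
    fun x hx => ⟨x, Set.Ioo_subset_Ico_self hx, rfl⟩

lemma one_le_apply_zero_of_tendsto (hβ : 1 < β) : 1 ≤ z 0 := by
  obtain ⟨x, hx, hcode⟩ := exists_betaCode_eq hz 1 (inv_lt_one_of_one_lt₀ hβ)
  rw [← hcode 0 one_pos, betaCode_apply, Function.iterate_zero_apply, Nat.one_le_floor_iff]
  calc (1 : ℝ) = β * β⁻¹ := (mul_inv_cancel₀ (by positivity)).symm
    _ ≤ β * x := by gcongr; exact hx.1.le

lemma betaValue_le_one_of_tendsto (hβ : 0 < β) (n : ℕ) : betaValue β z n ≤ 1 := by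
  obtain ⟨x, hx, hcode⟩ := exists_betaCode_eq hz n zero_lt_one
  rw [← betaValue_congr hcode, betaValue_betaCode hβ hx.1.le]
  have : 0 ≤ (betaMap β)^[n] x / β ^ n := by
    have := betaMap_iterate_nonneg β hx.1.le n
    positivity
  linarith [hx.2]

lemma betaCode_lexLE_of_tendsto (hβ : 0 ≤ β) {y : ℝ} (hy : y ∈ Set.Ico (0 : ℝ) 1) :
    LexLE (betaCode β y) z := by
  intro m hm
  obtain ⟨x, hx, hcode⟩ := exists_betaCode_eq hz (m + 1) hy.2
  rw [← hcode m m.lt_succ_self]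
  exact betaCode_lexLE_of_le hβ hy.1 hx.1.le m fun i hi => by rw [hm i hi, hcode i (by omega)]

lemma lexLE_of_mem_betaShift (hβ : 0 ≤ β) {x : ℕ → ℕ} (hx : x ∈ betaShift β) : LexLE x z :=
  closure_minimal (by rintro _ ⟨y, hy, rfl⟩; exact betaCode_lexLE_of_tendsto hz hβ hy)
    (isClosed_setOf_lexLE z) hx

end supremum

def IsAdmissible (z f : ℕ → ℕ) (m : ℕ) : Prop :=
  ∀ i j, i + j < m → (∀ l < j, f (i + l) = z l) → f (i + j) ≤ z j

lemma isAdmissible_shift {z f : ℕ → ℕ} {m : ℕ} (h : IsAdmissible z f m) (p : ℕ) :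
    IsAdmissible z (shift p f) (m - p) := fun i j hij hpre => by
  simpa only [shift, add_assoc] using
    h (p + i) j (by omega) fun l hl => by simpa only [shift, add_assoc] using hpre l hl

lemma IsAdmissible.append_zeros_append {z v w u : ℕ → ℕ} {a b k : ℕ} (hv : IsAdmissible z v a)
    (hw : IsAdmissible z w b) (hz0 : 1 ≤ z 0) (hk : ∀ n, ∃ i, n ≤ i ∧ i < n + k ∧ z i ≠ 0)
    (hu₁ : ∀ i < a, u i = v i) (hu₂ : ∀ i, a ≤ i → i < a + k → u i = 0)
    (hu₃ : ∀ i, u (a + k + i) = w i) : IsAdmissible z u (a + k + b) := by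
  intro i j hij hpre
  rcases lt_or_ge (i + j) a with hA | hA
  · rw [hu₁ _ hA]
    exact hv i j hA fun l hl => by rw [← hu₁ _ (by omega)]; exact hpre l hl
  rcases lt_or_ge (i + j) (a + k) with hB | hB
  · rw [hu₂ _ hA hB]
    exact Nat.zero_le _
  rcases le_or_gt (a + k) i with hC | hC
  · obtain ⟨i, rfl⟩ := Nat.exists_eq_add_of_le hC
    rw [add_assoc, hu₃]
    exact hw i j (by omega) fun l hl => by rw [← hu₃, ← add_assoc]; exact hpre l hl
  exfalso
  rcases le_or_gt a i with hD | hD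
  · have := hpre 0 (by omega)
    rw [add_zero, hu₂ i hD hC] at this
    omega
  · obtain ⟨l, hl, hlk, hzl⟩ := hk (a - i)
    have := hpre l (by omega)
    rw [hu₂ (i + l) (by omega) (by omega)] at this
    exact hzl this.symm

section value

variable {β : ℝ} {z : ℕ → ℕ} {k : ℕ} (hβ : 1 < β) (hle : ∀ n, betaValue β z n ≤ 1)
  (hk : ∀ n, ∃ i, n ≤ i ∧ i < n + k ∧ z i ≠ 0)
include hβ hle hk

lemma betaValue_le_one_sub (m : ℕ) : betaValue β z m ≤ 1 - 1 / β ^ (m + k) := by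
  obtain ⟨i, hmi, hik, hi⟩ := hk m
  have hβ0 : 0 < β := one_pos.trans hβ
  have hdigit : 1 / β ^ (m + k) ≤ z i / β ^ (i + 1) :=
    calc 1 / β ^ (m + k) ≤ 1 / β ^ (i + 1) :=
          one_div_le_one_div_of_le (by positivity) (pow_le_pow_right₀ hβ.le (by omega))
      _ ≤ z i / β ^ (i + 1) := by
          gcongr
          exact_mod_cast Nat.one_le_iff_ne_zero.2 hi
  linarith [hle (i + 1), betaValue_succ (β := β) (f := z) (n := i),
    betaValue_mono (f := z) hβ0.le hmi]

lemma betaValue_le_of_isAdmissible :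
    ∀ (m : ℕ) (f : ℕ → ℕ), IsAdmissible z f m → betaValue β f m ≤ 1 - 1 / β ^ (m + k) := by
  have hβ0 : 0 < β := one_pos.trans hβ
  intro m
  induction m using Nat.strong_induction_on with
  | _ m ih =>
  intro f hf
  by_cases hall : ∀ i < m, f i = z i
  · rw [betaValue_congr hall]
    exact betaValue_le_one_sub hβ hle hk m
  classical
  push Not at hall
  obtain ⟨hpm, hp⟩ := Nat.find_spec hall
  set p := Nat.find hall
  have hagree : ∀ i < p, f i = z i := fun i hi => by
    by_contra h
    exact Nat.find_min hall hi ⟨by omega, h⟩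
  have hlt : (f p : ℝ) + 1 ≤ z p := by
    have := hf 0 p (by omega) (by simpa using hagree)
    rw [zero_add] at this
    exact_mod_cast lt_of_le_of_ne this hp
  have hhead : betaValue β f (p + 1) ≤ betaValue β z (p + 1) - 1 / β ^ (p + 1) := by
    rw [betaValue_succ, betaValue_succ, betaValue_congr hagree, add_sub_assoc, ← sub_div]
    gcongr
    linarith
  have htail := ih (m - (p + 1)) (by omega) (shift (p + 1) f) (isAdmissible_shift hf (p + 1))
  have hpow : β ^ (m + k) = β ^ (m - (p + 1) + k) * β ^ (p + 1) := by
    rw [← pow_add]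
    congr 1
    omega
  calc betaValue β f m
      = betaValue β f (p + 1) + betaValue β (shift (p + 1) f) (m - (p + 1)) / β ^ (p + 1) := by
        rw [← betaValue_add, Nat.add_sub_cancel' hpm]
    _ ≤ betaValue β z (p + 1) - 1 / β ^ (p + 1)
          + (1 - 1 / β ^ (m - (p + 1) + k)) / β ^ (p + 1) := by
        gcongr
    _ = betaValue β z (p + 1) - 1 / β ^ (m + k) := by
        rw [hpow]
        field_simp
        ring
    _ ≤ 1 - 1 / β ^ (m + k) := by linarith [hle (p + 1)]

end value

section language

variable {β : ℝ} {z : ℕ → ℕ}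

lemma mem_langN_iff {X : Set (ℕ → ℕ)} {w : List ℕ} :
    w ∈ langN X ↔ ∃ x ∈ X, ∀ i < w.length, x i = w.getD i 0 := by
  refine exists_congr fun x => and_congr_right fun _ => ⟨fun h i hi => ?_, fun h i => ?_⟩
  · rw [List.getD_eq_getElem _ _ hi]
    exact h ⟨i, hi⟩
  · rw [List.get_eq_getElem, ← List.getD_eq_getElem _ 0 i.isLt]
    exact h i i.isLt

lemma ofFn_mem_langN {X : Set (ℕ → ℕ)} {x : ℕ → ℕ} (hx : x ∈ X) (n : ℕ) :
    List.ofFn (fun i : Fin n => x i) ∈ langN X :=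
  ⟨x, hx, fun i => by simp⟩

lemma isAdmissible_of_mem_langN (hz : Tendsto (betaCode β) (𝓝[<] 1) (𝓝 z)) (hβ : 0 ≤ β)
    {w : List ℕ} (hw : w ∈ langN (betaShift β)) : IsAdmissible z (w.getD · 0) w.length := by
  obtain ⟨x, hx, hxw⟩ := mem_langN_iff.1 hw
  intro i j hij hpre
  have := lexLE_of_mem_betaShift hz hβ (shift_mem_betaShift hx i) j fun l hl => by
    rw [shift, hxw _ (by omega)]
    exact hpre l hl
  rwa [shift, hxw _ hij] at this

lemma mem_langN_of_isAdmissible {k : ℕ} (hβ : 1 < β) (hle : ∀ n, betaValue β z n ≤ 1)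
    (hk : ∀ n, ∃ i, n ≤ i ∧ i < n + k ∧ z i ≠ 0) {w : List ℕ}
    (hw : IsAdmissible z (w.getD · 0) w.length) : w ∈ langN (betaShift β) := by
  have hβ0 : 0 < β := one_pos.trans hβ
  have hsuffix : ∀ j ≤ w.length, betaValue β (shift j (w.getD · 0)) (w.length - j) < 1 :=
    fun j _ => (betaValue_le_of_isAdmissible hβ hle hk _ _ (isAdmissible_shift hw j)).trans_lt
      (sub_lt_self _ (by positivity))
  have hy : betaValue β (w.getD · 0) w.length ∈ Set.Ico (0 : ℝ) 1 :=
    ⟨betaValue_nonneg hβ0.le, by simpa [shift_zero] using hsuffix 0 (Nat.zero_le _)⟩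
  exact mem_langN_iff.2 ⟨_, subset_closure ⟨_, hy, rfl⟩, betaCode_betaValue hβ0 hsuffix⟩

variable (hz : Tendsto (betaCode β) (𝓝[<] 1) (𝓝 z)) (hβ : 1 < β)
include hz hβ

lemma le_length_of_ofFn_append_append_mem_langN {n r : ℕ}
    (hrun : ∀ i, n ≤ i → i < n + r → z i = 0) {u : List ℕ}
    (hu : List.ofFn (fun i : Fin n => z i) ++ u ++ [z 0] ∈ langN (betaShift β)) :
    r ≤ u.length := by
  by_contra! hur
  set L := List.ofFn (fun i : Fin n => z i) ++ u ++ [z 0]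
  have hadm := isAdmissible_of_mem_langN hz (one_pos.trans hβ).le hu
  have hlex : ∀ j < n + u.length + 1, (∀ l < j, L.getD l 0 = z l) → L.getD j 0 ≤ z j :=
    fun j hj h => by simpa using hadm 0 j (by simp [L]; omega) (by simpa using h)
  have hagree : ∀ j < n + u.length, L.getD j 0 = z j := by
    intro j
    induction j using Nat.strong_induction_on with
    | _ j ih =>
    intro hj
    rcases lt_or_ge j n with hjn | hjn
    · rw [List.getD_append _ _ _ _ (by simp; omega), List.getD_append _ _ _ _ (by simp; omega),
        List.getD_eq_getElem _ _ (by simp; omega), List.getElem_ofFn]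
    · have := hlex j (by omega) fun l hl => ih l hl (by omega)
      rw [hrun j hjn (by omega)] at this ⊢
      omega
  have hlast : L.getD (n + u.length) 0 = z 0 := by
    rw [List.getD_append_right _ _ _ _ (by simp)]
    simp
  have := hlex _ (by omega) hagree
  have := hrun (n + u.length) (by omega) (by omega)
  have := one_le_apply_zero_of_tendsto hz hβ
  omega

lemma append_replicate_append_mem_langN {k : ℕ} (hk : ∀ n, ∃ i, n ≤ i ∧ i < n + k ∧ z i ≠ 0)
    {v w : List ℕ} (hv : v ∈ langN (betaShift β)) (hw : w ∈ langN (betaShift β)) :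
    v ++ List.replicate k 0 ++ w ∈ langN (betaShift β) := by
  have hβ0 : 0 < β := one_pos.trans hβ
  refine mem_langN_of_isAdmissible hβ (betaValue_le_one_of_tendsto hz hβ0) hk ?_
  have hlen : (v ++ List.replicate k 0 ++ w).length = v.length + k + w.length := by
    simp [add_assoc]
  rw [hlen]
  refine (isAdmissible_of_mem_langN hz hβ0.le hv).append_zeros_append
    (isAdmissible_of_mem_langN hz hβ0.le hw) (one_le_apply_zero_of_tendsto hz hβ) hk
    (fun i hi => ?_) (fun i h₁ h₂ => ?_) (fun i => ?_)
  · rw [List.getD_append _ _ _ _ (by simp; omega), List.getD_append _ _ _ _ hi]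
  · rw [List.getD_append _ _ _ _ (by simp; omega), List.getD_append_right _ _ _ _ h₁,
      List.getD_eq_getElem _ _ (by simp; omega), List.getElem_replicate]
  · rw [List.getD_append_right _ _ _ _ (by simp)]
    simp

lemma replicate_zero_mem_langN {k : ℕ} (hk : ∀ n, ∃ i, n ≤ i ∧ i < n + k ∧ z i ≠ 0) :
    List.replicate k 0 ∈ langN (betaShift β) :=
  mem_langN_of_isAdmissible hβ (betaValue_le_one_of_tendsto hz (one_pos.trans hβ)) hk
    fun i j _ _ => by simp

end language

end BetaExpansion

open BetaExpansion in
/-- The `β`-shift has the specification property if and only if the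
lexicographically maximal sequence `z` of `X_β` does not contain
arbitrarily long runs of consecutive `0`'s. -/
theorem stmt_9 (β : ℝ) (hβ : 1 < β) (z : ℕ → ℕ)
    (hz : Filter.Tendsto (betaCode β) (nhdsWithin 1 (Set.Iio (1 : ℝ))) (nhds z)) :
    (∃ τ : ℕ, ∀ v ∈ langN (betaShift β), ∀ w ∈ langN (betaShift β),
      ∃ u ∈ langN (betaShift β), u.length ≤ τ ∧
        v ++ u ++ w ∈ langN (betaShift β)) ↔
    (∃ k : ℕ, ∀ n : ℕ, ∃ i : ℕ, n ≤ i ∧ i < n + k ∧ z i ≠ 0) := by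
  have hzX := mem_betaShift_of_tendsto hz
  constructor
  · rintro ⟨τ, hspec⟩
    by_contra! hruns
    obtain ⟨n, hrun⟩ := hruns (τ + 1)
    obtain ⟨u, -, hτ, hu⟩ :=
      hspec _ (ofFn_mem_langN hzX n) [z 0] (by simpa using ofFn_mem_langN hzX 1)
    have := le_length_of_ofFn_append_append_mem_langN hz hβ hrun hu
    omega
  · rintro ⟨k, hk⟩
    exact ⟨k, fun v hv w hw => ⟨List.replicate k 0, replicate_zero_mem_langN hz hβ hk,
      (List.length_replicate ..).le, append_replicate_append_mem_langN hz hβ hk hv hw⟩⟩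
end

section
/- Let f : X → X be continuous on a compact metric space and suppose there exist δ_1 > 0, δ_2 ≥ 0, χ ∈ (0,1), τ ∈ ℕ such that for every pair of orbit segments (x_1, n_1), (x_2, n_2) ∈ X × ℕ there are t ∈ {0,...,τ} and y ∈ X with d(f^k y, f^k x_1) ≤ δ_1 χ^{n_1 - k} for 0 ≤ k < n_1 and d_{n_2}(f^{n_1+t} y, x_2) ≤ δ_2. Then (X, f) has the specification property at scale δ_2 + δ_1/(1−χ) with gap size τ: for any finite list (x_1,n_1),...,(x_k,n_k) of orbit segments there exist times 0 = T_1 < ... < T_k with T_{i+1} − (T_i + n_i) ∈ [0,τ] and a point y with f^{T_i}(y) ∈ B_{n_i}(x_i, δ_2 + δ_1/(1−χ)) for all i. -/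
/-!
Glue the segments one at a time: the point shadowing the first `i` segments is glued to segment
`i + 1`. The new point moves the orbit on `[0, N)`, where `N` is the end time of segment `i`,
by at most `δ₁ χ^{N - k}` at time `k`. Since the end times strictly increase, the errors that
accumulate at a time inside segment `j` form a sub-sum of a geometric series with ratio `χ`
starting at an exponent `≥ 1`, so they total less than `δ₁ / (1 - χ)`; on top of that comes the
error `δ₂` made when segment `j` itself was attached.
-/

open Finset

theorem mul_sum_Ico_pow_lt_div {c χ : ℝ} (hc : 0 < c) (hχ₀ : 0 ≤ χ) (hχ₁ : χ < 1)
    {a b : ℕ} (ha : a ≠ 0) : c * ∑ ℓ ∈ Ico a b, χ ^ ℓ < c / (1 - χ) := by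
  have hsum : ∑ ℓ ∈ Ico a b, χ ^ ℓ < 1 / (1 - χ) :=
    (geom_sum_Ico_le_of_lt_one hχ₀ hχ₁).trans_lt <|
      div_lt_div_of_pos_right (pow_lt_one₀ hχ₀ hχ₁ ha) (sub_pos.2 hχ₁)
  rwa [← mul_lt_mul_iff_right₀ hc, mul_one_div] at hsum

def IsGeomShadowChain {α : Type*} [PseudoMetricSpace α] (g : α → α) (c χ : ℝ) (z : ℕ → α)
    (N : ℕ → ℕ) : Prop :=
  ∀ i, (z (i + 1) = z i ∧ N (i + 1) = N i) ∨
    (N i < N (i + 1) ∧ ∀ k < N i, dist (g^[k] (z (i + 1))) (g^[k] (z i)) ≤ c * χ ^ (N i - k))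

theorem IsGeomShadowChain.dist_iterate_le {α : Type*} [PseudoMetricSpace α] {g : α → α}
    {c χ : ℝ} {z : ℕ → α} {N : ℕ → ℕ} (hstep : IsGeomShadowChain g c χ z N)
    (hc : 0 ≤ c) (hχ : 0 ≤ χ) {j i k : ℕ} (hji : j ≤ i) (hk : k < N j) :
    dist (g^[k] (z i)) (g^[k] (z j)) ≤ c * ∑ ℓ ∈ Ico (N j - k) (N i - k), χ ^ ℓ := by
  have hN : Monotone N := monotone_nat_of_le_succ fun i => by
    rcases hstep i with ⟨-, h⟩ | ⟨h, -⟩ <;> omega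
  induction i, hji using Nat.le_induction with
  | base => simp
  | succ i hji ih =>
    rcases hstep i with ⟨hz, hNi⟩ | ⟨hNi, hshadow⟩
    · rwa [hz, hNi]
    have hkN : k < N i := hk.trans_le (hN hji)
    calc dist (g^[k] (z (i + 1))) (g^[k] (z j))
        ≤ c * χ ^ (N i - k) + c * ∑ ℓ ∈ Ico (N j - k) (N i - k), χ ^ ℓ :=
          (dist_triangle _ _ _).trans (add_le_add (hshadow k hkN) ih)
      _ = c * ∑ ℓ ∈ Ico (N j - k) (N i - k + 1), χ ^ ℓ := by
          have := hN hji
          rw [sum_Ico_succ_top (by omega), mul_add, add_comm]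
      _ ≤ c * ∑ ℓ ∈ Ico (N j - k) (N (i + 1) - k), χ ^ ℓ := by
          gcongr
          omega

section GluedChain

variable {X : Type*} (t : X → X → ℕ → ℕ → ℕ) (y : X → X → ℕ → ℕ → X) (x : ℕ → X) (n : ℕ → ℕ)

/-- `(gluedChain t y x n i).1` is the point built from the segments `(x 0, n 0), …, (x i, n i)`
and `(gluedChain t y x n i).2` the time at which it starts following segment `i`. Gluing the
point `a`, followed up to time `N`, to the segment `(b, n₂)` gives `y a b N n₂`, with gap
`t a b N n₂`. Empty segments are skipped, so the end times increase strictly at every gluing. -/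
def gluedChain : ℕ → X × ℕ
  | 0 => (x 0, 0)
  | i + 1 =>
    let p := gluedChain i
    let N := p.2 + n i
    if n (i + 1) = 0 then (p.1, N)
    else (y p.1 (x (i + 1)) N (n (i + 1)), N + t p.1 (x (i + 1)) N (n (i + 1)))

variable {t y x n}

theorem gluedChain_succ_of_eq_zero {i : ℕ} (h : n (i + 1) = 0) :
    gluedChain t y x n (i + 1) =
      ((gluedChain t y x n i).1, (gluedChain t y x n i).2 + n i) := by
  simp [gluedChain, h]

theorem gluedChain_succ_of_ne_zero {i : ℕ} (h : n (i + 1) ≠ 0) :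
    let p := gluedChain t y x n i
    gluedChain t y x n (i + 1) =
      (y p.1 (x (i + 1)) (p.2 + n i) (n (i + 1)),
        p.2 + n i + t p.1 (x (i + 1)) (p.2 + n i) (n (i + 1))) := by
  simp [gluedChain, h]

theorem add_le_gluedChain_snd_succ (i : ℕ) :
    (gluedChain t y x n i).2 + n i ≤ (gluedChain t y x n (i + 1)).2 := by
  by_cases h : n (i + 1) = 0
  · simp [gluedChain_succ_of_eq_zero h]
  · simp [gluedChain_succ_of_ne_zero h]

theorem gluedChain_snd_succ_le {τ : ℕ} (ht : ∀ a b n₁ n₂, t a b n₁ n₂ ≤ τ) (i : ℕ) :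
    (gluedChain t y x n (i + 1)).2 ≤ (gluedChain t y x n i).2 + n i + τ := by
  by_cases h : n (i + 1) = 0
  · simp [gluedChain_succ_of_eq_zero h]
  · simp [gluedChain_succ_of_ne_zero h, ht]

variable [PseudoMetricSpace X] {f : X → X}

theorem isGeomShadowChain_gluedChain {c χ : ℝ}
    (hshadow : ∀ a b n₁ n₂, ∀ k < n₁, dist (f^[k] (y a b n₁ n₂)) (f^[k] a) ≤ c * χ ^ (n₁ - k)) :
    IsGeomShadowChain f c χ (fun i => (gluedChain t y x n i).1)
      (fun i => (gluedChain t y x n i).2 + n i) := by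
  intro i
  by_cases h : n (i + 1) = 0
  · left
    simp [gluedChain_succ_of_eq_zero h, h]
  · right
    simp only [gluedChain_succ_of_ne_zero h]
    exact ⟨by omega, hshadow _ _ _ _⟩

theorem dist_gluedChain_segment_le {δ : ℝ} (hδ : 0 ≤ δ)
    (hmatch : ∀ a b n₁ n₂, ∀ m < n₂, dist (f^[n₁ + t a b n₁ n₂ + m] (y a b n₁ n₂)) (f^[m] b) ≤ δ)
    {i m : ℕ} (hm : m < n i) :
    dist (f^[(gluedChain t y x n i).2 + m] (gluedChain t y x n i).1) (f^[m] (x i)) ≤ δ := by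
  cases i with
  | zero => simpa [gluedChain] using hδ
  | succ i =>
    have h : n (i + 1) ≠ 0 := by omega
    simpa only [gluedChain_succ_of_ne_zero h] using hmatch _ _ _ _ m hm

end GluedChain

theorem stmt_11_general {X : Type*} [MetricSpace X]
    (f : X → X)
    (δ₁ δ₂ χ : ℝ) (τ : ℕ)
    (hδ₁ : 0 < δ₁) (hδ₂ : 0 ≤ δ₂) (hχ₀ : 0 < χ) (hχ₁ : χ < 1)
    (honestep : ∀ (x₁ x₂ : X) (n₁ n₂ : ℕ), ∃ t ≤ τ, ∃ y : X,
      (∀ k < n₁, dist (f^[k] y) (f^[k] x₁) ≤ δ₁ * χ ^ (n₁ - k)) ∧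
      (∀ m < n₂, dist (f^[n₁ + t + m] y) (f^[m] x₂) ≤ δ₂)) :
    ∀ (k : ℕ) (x : ℕ → X) (nn : ℕ → ℕ), ∃ (T : ℕ → ℕ) (y : X),
      T 0 = 0 ∧
      (∀ i : ℕ, i + 1 < k →
        T i + nn i ≤ T (i + 1) ∧ T (i + 1) ≤ T i + nn i + τ) ∧
      (∀ i < k, ∀ m < nn i,
        dist (f^[T i + m] y) (f^[m] (x i)) < δ₂ + δ₁ / (1 - χ)) := by
  intro k x nn
  choose t ht y hshadow hmatch using honestep
  refine ⟨fun i => (gluedChain t y x nn i).2, (gluedChain t y x nn (k - 1)).1, rfl,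
    fun i _ => ⟨add_le_gluedChain_snd_succ i, gluedChain_snd_succ_le ht i⟩, ?_⟩
  intro i hi m hm
  have hchain := (isGeomShadowChain_gluedChain (t := t) (x := x) (n := nn) hshadow).dist_iterate_le
    hδ₁.le hχ₀.le (j := i) (i := k - 1) (k := (gluedChain t y x nn i).2 + m) (by omega) (by omega)
  set P := gluedChain t y x nn
  calc dist (f^[(P i).2 + m] (P (k - 1)).1) (f^[m] (x i))
      ≤ dist (f^[(P i).2 + m] (P (k - 1)).1) (f^[(P i).2 + m] (P i).1)
        + dist (f^[(P i).2 + m] (P i).1) (f^[m] (x i)) := dist_triangle _ _ _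
    _ < δ₁ / (1 - χ) + δ₂ :=
        add_lt_add_of_lt_of_le
          (hchain.trans_lt (mul_sum_Ico_pow_lt_div hδ₁ hχ₀.le hχ₁ (by omega)))
          (dist_gluedChain_segment_le hδ₂ hmatch hm)
    _ = δ₂ + δ₁ / (1 - χ) := add_comm _ _

/-- One-step gluing implies specification: if any two orbit segments can be
glued with exponentially decaying error `δ₁ χ^{n₁−k}` on the first segment
and error `δ₂` on the second, then `(X,f)` has the specification property
at scale `δ₂ + δ₁/(1−χ)` with gap size `τ`. -/
theorem stmt_11 {X : Type*} [MetricSpace X] [CompactSpace X]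
    (f : X → X) (hf : Continuous f)
    (δ₁ δ₂ χ : ℝ) (τ : ℕ)
    (hδ₁ : 0 < δ₁) (hδ₂ : 0 ≤ δ₂) (hχ₀ : 0 < χ) (hχ₁ : χ < 1)
    (honestep : ∀ (x₁ x₂ : X) (n₁ n₂ : ℕ), ∃ t ≤ τ, ∃ y : X,
      (∀ k < n₁, dist (f^[k] y) (f^[k] x₁) ≤ δ₁ * χ ^ (n₁ - k)) ∧
      (∀ m < n₂, dist (f^[n₁ + t + m] y) (f^[m] x₂) ≤ δ₂)) :
    ∀ (k : ℕ) (x : ℕ → X) (nn : ℕ → ℕ), ∃ (T : ℕ → ℕ) (y : X),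
      T 0 = 0 ∧
      (∀ i : ℕ, i + 1 < k →
        T i + nn i ≤ T (i + 1) ∧ T (i + 1) ≤ T i + nn i + τ) ∧
      (∀ i < k, ∀ m < nn i,
        dist (f^[T i + m] y) (f^[m] (x i)) < δ₂ + δ₁ / (1 - χ)) :=
  stmt_11_general f δ₁ δ₂ χ τ hδ₁ hδ₂ hχ₀ hχ₁ honestep
end

section
/- Let f : X → X be continuous on a compact metric space, topologically transitive, uniformly expanding at scale δ (d(fx,fy) ≥ e^λ d(x,y) whenever d(x,y) < δ for some λ > 0) and locally onto at scale δ (f(B(x,δ)) ⊇ B(fx,δ) for all x). Then f^n(B_n(x,δ)) ⊇ B(f^n x, δ) for all x and n, and (X, f) has the specification property at scale δ/(1−e^{-λ}). -/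
/-!
Local surjectivity and non-contraction at scale `δ` let a point `δ`-close to `f^[n] x` be pulled
back along the orbit of `x` to a preimage whose first `n` iterates stay as close to those of `x`
as the point was to `f^[n] x`: inverse branches do not expand. Transitivity and compactness bound
the transition times between `δ/2`-balls uniformly by some `τ`. Gluing orbit segments from the
last one backwards, each time pulling the current shadowing point back along a transition orbit
and then along the previous segment, yields an orbit that `δ`-shadows all segments, and
`δ ≤ δ / (1 - e^{-λ})`.
-/

open Function Metric Set

section

variable {X : Type*} [MetricSpace X]

def bowenBall (f : X → X) (x : X) (n : ℕ) (δ : ℝ) : Set X :=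
  {y | ∀ k < n, dist (f^[k] y) (f^[k] x) < δ}

def HasSpecification (f : X → X) (ε : ℝ) (τ : ℕ) : Prop :=
  ∀ (k : ℕ) (x : ℕ → X) (nn : ℕ → ℕ), ∃ (T : ℕ → ℕ) (y : X),
    T 0 = 0 ∧
    (∀ i : ℕ, i + 1 < k → T i + nn i ≤ T (i + 1) ∧ T (i + 1) ≤ T i + nn i + τ) ∧
    (∀ i < k, ∀ m < nn i, dist (f^[T i + m] y) (f^[m] (x i)) < ε)

theorem HasSpecification.mono {f : X → X} {ε ε' : ℝ} {τ : ℕ} (h : HasSpecification f ε τ)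
    (hε : ε ≤ ε') : HasSpecification f ε' τ := by
  intro k x nn
  obtain ⟨T, y, hT0, hgap, hshadow⟩ := h k x nn
  exact ⟨T, y, hT0, hgap, fun i hi m hm => (hshadow i hi m hm).trans_le hε⟩

theorem exists_uniform_transition_time [CompactSpace X] {f : X → X}
    (htrans : ∀ U V : Set X, IsOpen U → IsOpen V → U.Nonempty → V.Nonempty →
      ∃ n : ℕ, (U ∩ f^[n] ⁻¹' V).Nonempty)
    {ε : ℝ} (hε : 0 < ε) :
    ∃ τ : ℕ, ∀ a b : X, ∃ t ≤ τ, ∃ p ∈ ball a ε, f^[t] p ∈ ball b ε := by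
  have hε2 := half_pos hε
  obtain ⟨s, -, hs⟩ := isCompact_univ.elim_nhds_subcover (fun c : X => ball c (ε / 2))
    fun c _ => ball_mem_nhds c hε2
  have hnet : ∀ a : X, ∃ c ∈ s, a ∈ ball c (ε / 2) := fun a => by
    simpa only [mem_iUnion, exists_prop] using hs (mem_univ a)
  choose N P hP using fun c d : X => htrans _ _ isOpen_ball isOpen_ball
    ⟨c, mem_ball_self hε2⟩ ⟨d, mem_ball_self hε2⟩
  refine ⟨s.sup fun c => s.sup (N c), fun a b => ?_⟩
  obtain ⟨c, hcs, hac⟩ := hnet a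
  obtain ⟨d, hds, hbd⟩ := hnet b
  obtain ⟨hPc, hPd⟩ := hP c d
  refine ⟨N c d, (Finset.le_sup hds).trans (Finset.le_sup (f := fun c => s.sup (N c)) hcs),
    P c d, ?_, ?_⟩
  · rw [mem_ball] at hac hPc ⊢
    linarith [dist_triangle (P c d) c a, dist_comm a c]
  · rw [mem_preimage, mem_ball] at hPd
    rw [mem_ball] at hbd ⊢
    linarith [dist_triangle (f^[N c d] (P c d)) d b, dist_comm b d]

section InverseBranches

variable {f : X → X} {δ : ℝ}
  (hexp : ∀ x y : X, dist x y < δ → dist x y ≤ dist (f x) (f y))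
  (honto : ∀ x : X, ball (f x) δ ⊆ f '' ball x δ)
include hexp honto

theorem exists_iterate_eq_forall_dist_le (n : ℕ) {x z : X} (hz : dist z (f^[n] x) < δ) :
    ∃ y, f^[n] y = z ∧ ∀ k ≤ n, dist (f^[k] y) (f^[k] x) ≤ dist z (f^[n] x) := by
  induction n generalizing z with
  | zero => exact ⟨z, rfl, fun k hk => by simp [Nat.le_zero.mp hk]⟩
  | succ n ih =>
    rw [iterate_succ_apply'] at hz ⊢
    obtain ⟨w, hw, rfl⟩ := honto (f^[n] x) hz
    have hwz := hexp w (f^[n] x) hw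
    obtain ⟨y, rfl, hy⟩ := ih (hwz.trans_lt hz)
    refine ⟨y, iterate_succ_apply' f n y, fun k hk => ?_⟩
    rcases Nat.le_succ_iff.mp hk with hk | rfl
    · exact (hy k hk).trans hwz
    · rw [iterate_succ_apply', iterate_succ_apply']

theorem ball_iterate_subset_image_bowenBall (x : X) (n : ℕ) :
    ball (f^[n] x) δ ⊆ f^[n] '' bowenBall f x n δ := fun z hz => by
  obtain ⟨y, hyz, hy⟩ := exists_iterate_eq_forall_dist_le hexp honto n (mem_ball.mp hz)
  exact ⟨y, fun k hk => (hy k hk.le).trans_lt hz, hyz⟩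

theorem exists_segment_shadow_then_iterate_eq {τ : ℕ}
    (hτ : ∀ a b : X, ∃ t ≤ τ, ∃ p ∈ ball a (δ / 2), f^[t] p ∈ ball b (δ / 2))
    (x z : X) (n : ℕ) :
    ∃ t ≤ τ, ∃ y, f^[n + t] y = z ∧ ∀ m ≤ n, dist (f^[m] y) (f^[m] x) < δ := by
  obtain ⟨t, htτ, p, hp, hpz⟩ := hτ (f^[n] x) z
  rw [mem_ball] at hp hpz
  obtain ⟨w, rfl, hw⟩ :=
    exists_iterate_eq_forall_dist_le hexp honto t (z := z) (x := p)
      (by linarith [dist_comm z (f^[t] p), dist_nonneg (x := p) (y := f^[n] x)])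
  have hwp : dist w p ≤ dist (f^[t] w) (f^[t] p) := hw 0 t.zero_le
  have hwx : dist w (f^[n] x) < δ := by
    linarith [dist_triangle w p (f^[n] x), dist_comm (f^[t] w) (f^[t] p),
      dist_nonneg (x := p) (y := f^[n] x)]
  obtain ⟨y, rfl, hy⟩ := exists_iterate_eq_forall_dist_le hexp honto n hwx
  exact ⟨t, htτ, y, by rw [add_comm, iterate_add_apply], fun m hm => (hy m hm).trans_lt hwx⟩

theorem hasSpecification_of_uniform_transition {τ : ℕ}
    (hτ : ∀ a b : X, ∃ t ≤ τ, ∃ p ∈ ball a (δ / 2), f^[t] p ∈ ball b (δ / 2)) :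
    HasSpecification f δ τ := by
  intro k
  induction k with
  | zero => exact fun x _ => ⟨fun _ => 0, x 0, rfl, fun i hi => by omega, fun i hi => by omega⟩
  | succ k ih =>
    intro x nn
    obtain ⟨T, y', hT0, hgap, hshadow⟩ := ih (fun i => x (i + 1)) (fun i => nn (i + 1))
    obtain ⟨t, htτ, y, hyy', hy⟩ :=
      exists_segment_shadow_then_iterate_eq hexp honto hτ (x 0) y' (nn 0)
    refine ⟨fun | 0 => 0 | j + 1 => nn 0 + t + T j, y, rfl, fun i hi => ?_, fun i hi m hm => ?_⟩
    · rcases i with _ | j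
      · dsimp only
        omega
      · have := hgap j (by omega)
        dsimp only
        omega
    · rcases i with _ | j
      · simpa using hy m hm.le
      · dsimp only
        rw [show nn 0 + t + T j + m = T j + m + (nn 0 + t) by omega, iterate_add_apply, hyy']
        exact hshadow j (by omega) m hm

end InverseBranches

end

theorem stmt_12_general {X : Type*} [MetricSpace X] [CompactSpace X]
    (f : X → X) (δ lam : ℝ) (hδ : 0 < δ) (hlam : 0 < lam)
    (htrans : ∀ U V : Set X, IsOpen U → IsOpen V → U.Nonempty → V.Nonempty →
      ∃ n : ℕ, (U ∩ f^[n] ⁻¹' V).Nonempty)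
    (hexp : ∀ x y : X, dist x y < δ → Real.exp lam * dist x y ≤ dist (f x) (f y))
    (honto : ∀ x : X, Metric.ball (f x) δ ⊆ f '' Metric.ball x δ) :
    (∀ (x : X) (n : ℕ), Metric.ball (f^[n] x) δ ⊆
      f^[n] '' {y | ∀ k < n, dist (f^[k] y) (f^[k] x) < δ}) ∧
    ∃ τ : ℕ, ∀ (k : ℕ) (x : ℕ → X) (nn : ℕ → ℕ), ∃ (T : ℕ → ℕ) (y : X),
      T 0 = 0 ∧
      (∀ i : ℕ, i + 1 < k →
        T i + nn i ≤ T (i + 1) ∧ T (i + 1) ≤ T i + nn i + τ) ∧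
      (∀ i < k, ∀ m < nn i,
        dist (f^[T i + m] y) (f^[m] (x i)) < δ / (1 - Real.exp (-lam))) := by
  have hnoncontr : ∀ x y : X, dist x y < δ → dist x y ≤ dist (f x) (f y) := fun x y hxy =>
    (le_mul_of_one_le_left dist_nonneg (Real.one_le_exp hlam.le)).trans (hexp x y hxy)
  have hscale : δ ≤ δ / (1 - Real.exp (-lam)) :=
    le_div_self hδ.le (by linarith [Real.exp_lt_one_iff.mpr (neg_neg_of_pos hlam)])
      (by linarith [Real.exp_pos (-lam)])
  obtain ⟨τ, hτ⟩ := exists_uniform_transition_time htrans (half_pos hδ)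
  exact ⟨ball_iterate_subset_image_bowenBall hnoncontr honto,
    τ, (hasSpecification_of_uniform_transition hnoncontr honto hτ).mono hscale⟩

/-- A topologically transitive, uniformly expanding, locally onto map
satisfies `f^n(B_n(x,δ)) ⊇ B(f^n x, δ)` and has the specification property
at scale `δ/(1−e^{-λ})`. -/
theorem stmt_12 {X : Type*} [MetricSpace X] [CompactSpace X] [Nonempty X]
    (f : X → X) (hf : Continuous f) (δ lam : ℝ) (hδ : 0 < δ) (hlam : 0 < lam)
    (htrans : ∀ U V : Set X, IsOpen U → IsOpen V → U.Nonempty → V.Nonempty →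
      ∃ n : ℕ, (U ∩ f^[n] ⁻¹' V).Nonempty)
    (hexp : ∀ x y : X, dist x y < δ → Real.exp lam * dist x y ≤ dist (f x) (f y))
    (honto : ∀ x : X, Metric.ball (f x) δ ⊆ f '' Metric.ball x δ) :
    (∀ (x : X) (n : ℕ), Metric.ball (f^[n] x) δ ⊆
      f^[n] '' {y | ∀ k < n, dist (f^[k] y) (f^[k] x) < δ}) ∧
    ∃ τ : ℕ, ∀ (k : ℕ) (x : ℕ → X) (nn : ℕ → ℕ), ∃ (T : ℕ → ℕ) (y : X),
      T 0 = 0 ∧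
      (∀ i : ℕ, i + 1 < k →
        T i + nn i ≤ T (i + 1) ∧ T (i + 1) ≤ T i + nn i + τ) ∧
      (∀ i < k, ∀ m < nn i,
        dist (f^[T i + m] y) (f^[m] (x i)) < δ / (1 - Real.exp (-lam))) :=
  stmt_12_general f δ lam hδ hlam htrans hexp honto
end
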